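/- In the simplex setting, for all integers n with 3 ≤ n ≤ m, Σ_{σ∈A_m} σ(Adj_n) = n(n−1)(n−2) · ((m−3)!/2) · Adj_m in ℝ[G]. -/

import Mathlib

/-!
The automorphism `σ ∈ A_m` carries `Δ_e` to `Δ_{σe}`, so `Σ_σ σ(Adj_n)` is a sum of terms
`Δ_e Δ_f` over adjacent pairs `(e, f)` of edges of the whole simplex, each counted once for every
`σ` with `e ∪ f ⊆ σ{1, …, n}`. As `e ∪ f` has three vertices, this count is
`n(n-1)(n-2)(m-3)!/2`: over `S_m` it depends only on the size of `e ∪ f` (transitivity), so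
double counting pairs (permutation, 3-set) evaluates it, and multiplying on the right by a
transposition of two vertices of `{1, …, n}` matches the even and the odd ones.
-/

noncomputable section
open scoped Classical

/-- The Laplacian `Δ = |S|·1 - Σ_{s ∈ S} s` in the real group algebra `ℝ[G]`. -/
def lap {G : Type*} [Group G] (S : Finset G) : MonoidAlgebra ℝ G :=
  (S.card : MonoidAlgebra ℝ G) - ∑ s ∈ S, MonoidAlgebra.of ℝ G s

/-- The star involution on `ℝ[G]` induced by `g ↦ g⁻¹`. -/
def starG {G : Type*} [Group G] (x : MonoidAlgebra ℝ G) : MonoidAlgebra ℝ G :=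
  MonoidAlgebra.mapDomain (fun g => g⁻¹) x

/-- `g` lies in the ball of radius `R` about the identity in the word metric
induced by the (symmetric) set `S`. -/
def inBall {G : Type*} [Group G] (S : Set G) (R : ℕ) (g : G) : Prop :=
  ∃ l : List G, (∀ x ∈ l, x ∈ S) ∧ l.length ≤ R ∧ l.prod = g

/-- `x ∈ Σ²_R ℝ[G]`: `x` is a finite sum of hermitian squares `ξ_i* ξ_i` with each
`ξ_i` supported in the ball of radius `R` about the identity. -/
def SOS {G : Type*} [Group G] (S : Set G) (R : ℕ) (x : MonoidAlgebra ℝ G) : Prop :=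
  ∃ (N : ℕ) (ξ : Fin N → MonoidAlgebra ℝ G),
    (∀ i, ∀ g ∈ (ξ i).coeff.support, inBall S R g) ∧
    x = ∑ i, starG (ξ i) * ξ i

/-- The simplex setting: a group `G` with a finite symmetric generating set `S`
(with `1 ∉ S`), an action of the alternating group `A_m` on `G` by automorphisms
preserving `S`, and an `A_m`-equivariant labelling of `S` by edges (2-element
subsets) of `{1,…,m}` such that generators with disjoint labels commute. -/
structure SimplexSetting (m : ℕ) (G : Type*) [Group G] where
  S : Finset G
  one_not_mem : (1 : G) ∉ S
  symm : ∀ s ∈ S, s⁻¹ ∈ S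
  generates : Subgroup.closure (S : Set G) = ⊤
  act : alternatingGroup (Fin m) →* MulAut G
  act_mem : ∀ (σ : alternatingGroup (Fin m)), ∀ s ∈ S, act σ s ∈ S
  lbl : G → Finset (Fin m)
  lbl_card : ∀ s ∈ S, (lbl s).card = 2
  lbl_equivariant : ∀ (σ : alternatingGroup (Fin m)), ∀ s ∈ S,
    lbl (act σ s) = (lbl s).image (σ : Equiv.Perm (Fin m))
  comm : ∀ s ∈ S, ∀ t ∈ S, Disjoint (lbl s) (lbl t) → Commute s t

namespace SimplexSetting

variable {m : ℕ} {G : Type*} [Group G] (P : SimplexSetting m G)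

/-- The set `E_n` of edges of the simplex spanned by the first `n` vertices. -/
def edges (m n : ℕ) : Finset (Finset (Fin m)) :=
  Finset.univ.filter (fun e => e.card = 2 ∧ ∀ i ∈ e, (i : ℕ) < n)

/-- `S_e`: the generators labelled by the edge `e`. -/
def Se (e : Finset (Fin m)) : Finset G := P.S.filter (fun s => P.lbl s = e)

/-- The edge Laplacian `Δ_e = |S_e|·1 - Σ_{t ∈ S_e} t`. -/
def De (e : Finset (Fin m)) : MonoidAlgebra ℝ G :=
  ((P.Se e).card : MonoidAlgebra ℝ G) - ∑ t ∈ P.Se e, MonoidAlgebra.of ℝ G t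

/-- `Δ_n = Σ_{e ∈ E_n} Δ_e`. -/
def Dn (n : ℕ) : MonoidAlgebra ℝ G := ∑ e ∈ edges m n, P.De e

/-- `Sq_n = Σ_{e ∈ E_n} Δ_e²`. -/
def Sq (n : ℕ) : MonoidAlgebra ℝ G := ∑ e ∈ edges m n, (P.De e) ^ 2

/-- `Adj_n`: the sum of `Δ_e Δ_f` over ordered pairs of edges of `E_n` sharing
exactly one vertex. -/
def Adj (n : ℕ) : MonoidAlgebra ℝ G :=
  ∑ e ∈ edges m n, ∑ f ∈ (edges m n).filter (fun f => (e ∩ f).card = 1), P.De e * P.De f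

/-- `Op_n`: the sum of `Δ_e Δ_f` over ordered pairs of disjoint edges of `E_n`. -/
def Op (n : ℕ) : MonoidAlgebra ℝ G :=
  ∑ e ∈ edges m n, ∑ f ∈ (edges m n).filter (fun f => e ∩ f = ∅), P.De e * P.De f

/-- The induced action of `A_m` on the group algebra `ℝ[G]`. -/
def algAct (σ : alternatingGroup (Fin m)) (x : MonoidAlgebra ℝ G) : MonoidAlgebra ℝ G :=
  MonoidAlgebra.mapDomain (P.act σ) x

/-- `h_n = (n-2)·(n-1)!/2`, as a real number. -/
def hr (n : ℕ) : ℝ := ((n : ℝ) - 2) * (Nat.factorial (n - 1)) / 2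

end SimplexSetting

open SimplexSetting

open Finset Equiv
open scoped Pointwise Nat

namespace Equiv.Perm

variable {α : Type*} [DecidableEq α]

theorem exists_smul_finset_eq {T T' : Finset α} (h : #T = #T') :
    ∃ τ : Perm α, τ • T = T' := by
  have := Set.powersetCard.isPretransitive (α := α) (n := #T)
  obtain ⟨τ, hτ⟩ := MulAction.exists_smul_eq (Perm α)
    (⟨T, rfl⟩ : Set.powersetCard α #T) ⟨T', h.symm⟩
  exact ⟨τ, congrArg Subtype.val hτ⟩

theorem swap_smul_finset_eq {s : Finset α} {a b : α} (ha : a ∈ s) (hb : b ∈ s) :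
    swap a b • s = s :=
  coe_injective <| by
    rw [coe_smul_finset]
    exact MulAction.mem_stabilizer_iff.1 (swap_mem_stabilizer (s := (s : Set α)) ha hb)

variable [Fintype α]

theorem card_filter_subset_smul_congr (s : Finset α) {T T' : Finset α} (h : #T = #T') :
    #{σ : Perm α | T ⊆ σ • s} = #{σ : Perm α | T' ⊆ σ • s} := by
  obtain ⟨τ, rfl⟩ := exists_smul_finset_eq h
  refine card_equiv (Equiv.mulLeft τ) fun σ => ?_
  simp [mul_smul, smul_finset_subset_smul_finset_iff]

theorem sum_card_filter_subset_smul (s : Finset α) (k : ℕ) :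
    ∑ T ∈ powersetCard k univ, #{σ : Perm α | T ⊆ σ • s} =
      (Fintype.card α)! * (#s).choose k := by
  have hσ (σ : Perm α) :
      {T ∈ powersetCard k (univ : Finset α) | T ⊆ σ • s} = powersetCard k (σ • s) := by
    ext T
    simp [mem_powersetCard, and_comm]
  have := sum_card_bipartiteAbove_eq_sum_card_bipartiteBelow
    (s := powersetCard k (univ : Finset α)) (t := (univ : Finset (Perm α)))
    (r := fun T σ => T ⊆ σ • s)
  simp only [bipartiteAbove, bipartiteBelow, hσ, card_powersetCard, card_smul_finset] at this
  rw [this, sum_const, card_univ, Fintype.card_perm, smul_eq_mul]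

theorem card_filter_subset_smul (s T : Finset α) :
    #{σ : Perm α | T ⊆ σ • s} = (#s).descFactorial #T * (Fintype.card α - #T)! := by
  have hsum : ∑ T' ∈ powersetCard #T univ, #{σ : Perm α | T' ⊆ σ • s} =
      #{σ : Perm α | T ⊆ σ • s} * (Fintype.card α).choose #T := by
    rw [sum_congr rfl fun T' hT' => card_filter_subset_smul_congr s (mem_powersetCard.1 hT').2,
      sum_const, card_powersetCard, card_univ, smul_eq_mul, mul_comm]
  have hpos : 0 < (Fintype.card α).choose #T := Nat.choose_pos (card_le_univ T)
  refine Nat.eq_of_mul_eq_mul_right hpos ?_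
  rw [← hsum, sum_card_filter_subset_smul, Nat.descFactorial_eq_factorial_mul_choose,
    ← Nat.choose_mul_factorial_mul_factorial (card_le_univ T)]
  ring

theorem mul_swap_mem_alternatingGroup_iff {a b : α} (hab : a ≠ b) (σ : Perm α) :
    σ * swap a b ∈ alternatingGroup α ↔ σ ∉ alternatingGroup α := by
  rcases Int.units_eq_one_or (sign σ) with h | h <;>
    simp [mem_alternatingGroup, sign_mul, sign_swap hab, h]

theorem two_mul_card_filter_alternatingGroup {p : Perm α → Prop} [DecidablePred p] {a b : α}
    (hab : a ≠ b) (hp : ∀ σ, p (σ * swap a b) ↔ p σ) :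
    2 * #{σ : alternatingGroup α | p σ} = #{σ : Perm α | p σ} := by
  have heven :
      #{σ : alternatingGroup α | p σ} = #{σ : Perm α | p σ ∧ σ ∈ alternatingGroup α} := by
    rw [← card_map (Function.Embedding.subtype _)]
    congr 1
    ext σ
    simp [and_comm]
  have hodd : #{σ : Perm α | p σ ∧ σ ∈ alternatingGroup α} =
      #{σ : Perm α | p σ ∧ σ ∉ alternatingGroup α} :=
    card_equiv (Equiv.mulRight (swap a b)) fun σ => by
      simp only [mem_filter, mem_univ, true_and, coe_mulRight, hp,
        mul_swap_mem_alternatingGroup_iff hab, not_not]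
  rw [← card_filter_add_card_filter_not (fun σ => σ ∈ alternatingGroup α), filter_filter,
    filter_filter, heven, ← hodd, two_mul]

theorem two_mul_card_filter_alternatingGroup_subset_smul {s : Finset α} (hs : 1 < #s)
    (T : Finset α) :
    2 * #{σ : alternatingGroup α | T ⊆ σ • s} =
      (#s).descFactorial #T * (Fintype.card α - #T)! := by
  obtain ⟨a, ha, b, hb, hab⟩ := one_lt_card.1 hs
  rw [← card_filter_subset_smul]
  exact two_mul_card_filter_alternatingGroup (p := fun σ : Perm α => T ⊆ σ • s) hab
    fun σ => by rw [mul_smul, swap_smul_finset_eq ha hb]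

end Equiv.Perm

def adjacentEdgePairs {α : Type*} [DecidableEq α] (V : Finset α) :
    Finset (Finset α × Finset α) :=
  {p ∈ V.powersetCard 2 ×ˢ V.powersetCard 2 | #(p.1 ∩ p.2) = 1}

section adjacentEdgePairs

variable {α : Type*} [DecidableEq α] {V W : Finset α} {p : Finset α × Finset α}

theorem card_union_of_mem_adjacentEdgePairs (hp : p ∈ adjacentEdgePairs V) :
    #(p.1 ∪ p.2) = 3 := by
  simp only [adjacentEdgePairs, mem_filter, mem_product, mem_powersetCard] at hp
  have := card_union_add_card_inter p.1 p.2
  omega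

theorem adjacentEdgePairs_eq_filter (hVW : V ⊆ W) :
    adjacentEdgePairs V = {p ∈ adjacentEdgePairs W | p.1 ∪ p.2 ⊆ V} := by
  ext p
  simp only [adjacentEdgePairs, mem_filter, mem_product, mem_powersetCard, union_subset_iff]
  constructor
  · rintro ⟨⟨⟨h1, c1⟩, h2, c2⟩, hc⟩
    exact ⟨⟨⟨⟨h1.trans hVW, c1⟩, h2.trans hVW, c2⟩, hc⟩, h1, h2⟩
  · rintro ⟨⟨⟨⟨-, c1⟩, -, c2⟩, hc⟩, h1, h2⟩
    exact ⟨⟨⟨h1, c1⟩, h2, c2⟩, hc⟩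

variable {G : Type*} [Group G] [MulAction G α]

theorem smul_mem_adjacentEdgePairs_smul_iff (g : G) :
    g • p ∈ adjacentEdgePairs (g • V) ↔ p ∈ adjacentEdgePairs V := by
  simp [adjacentEdgePairs, mem_powersetCard, smul_finset_subset_smul_finset_iff,
    card_smul_finset, ← smul_finset_inter]

theorem sum_adjacentEdgePairs_smul {M : Type*} [AddCommMonoid M]
    (f : Finset α × Finset α → M) (g : G) (V : Finset α) :
    ∑ p ∈ adjacentEdgePairs V, f (g • p) = ∑ p ∈ adjacentEdgePairs (g • V), f p :=
  sum_equiv (MulAction.toPerm g) (fun _ => (smul_mem_adjacentEdgePairs_smul_iff g).symm)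
    fun _ _ => rfl

end adjacentEdgePairs

namespace SimplexSetting

/-- The paper's vertices `{1, …, n}`; `Fin m` numbers them from `0`. -/
def lowVertices (m n : ℕ) : Finset (Fin m) := {i | (i : ℕ) < n}

theorem card_lowVertices {m n : ℕ} (h : n ≤ m) : #(lowVertices m n) = n := by
  rw [lowVertices, Fin.card_filter_val_lt, min_eq_right h]

theorem lowVertices_self (m : ℕ) : lowVertices m m = univ := by
  ext i
  simp [lowVertices]

theorem edges_eq_powersetCard (m n : ℕ) : edges m n = (lowVertices m n).powersetCard 2 := by
  ext e
  simp [edges, lowVertices, mem_powersetCard, subset_iff, and_comm]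

variable {m : ℕ} {G : Type*} [Group G] (P : SimplexSetting m G)

theorem Adj_eq_sum_adjacentEdgePairs (n : ℕ) :
    P.Adj n = ∑ p ∈ adjacentEdgePairs (lowVertices m n), P.De p.1 * P.De p.2 := by
  rw [Adj, adjacentEdgePairs, sum_filter, sum_product, edges_eq_powersetCard]
  exact sum_congr rfl fun e _ => sum_filter _ _

theorem algAct_eq_mapDomainRingHom (σ : alternatingGroup (Fin m)) :
    P.algAct σ = MonoidAlgebra.mapDomainRingHom ℝ (P.act σ : G →* G) := rfl

theorem lbl_act (σ : alternatingGroup (Fin m)) {s : G} (hs : s ∈ P.S) :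
    P.lbl (P.act σ s) = σ • P.lbl s :=
  P.lbl_equivariant σ s hs

theorem act_mem_iff (σ : alternatingGroup (Fin m)) {s : G} : P.act σ s ∈ P.S ↔ s ∈ P.S :=
  ⟨fun h => by simpa using P.act_mem σ⁻¹ _ h, P.act_mem σ s⟩

theorem Se_smul (σ : alternatingGroup (Fin m)) (e : Finset (Fin m)) :
    P.Se (σ • e) = (P.Se e).map (P.act σ).toEquiv.toEmbedding := by
  ext s
  obtain ⟨t, rfl⟩ := (P.act σ).surjective s
  simp only [Se, mem_filter, MulEquiv.toEquiv_eq_coe, mem_map_equiv,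
    EquivLike.coe_symm_apply_apply, act_mem_iff]
  exact and_congr_right fun ht => by rw [P.lbl_act σ ht, smul_left_cancel_iff]

theorem algAct_De (σ : alternatingGroup (Fin m)) (e : Finset (Fin m)) :
    P.algAct σ (P.De e) = P.De (σ • e) := by
  rw [algAct_eq_mapDomainRingHom, De, De, Se_smul, map_sub, map_natCast, map_sum, card_map,
    sum_map]
  congr 1
  exact sum_congr rfl fun t _ => MonoidAlgebra.mapDomain_single

theorem algAct_Adj (σ : alternatingGroup (Fin m)) (n : ℕ) :
    P.algAct σ (P.Adj n) =
      ∑ p ∈ adjacentEdgePairs (σ • lowVertices m n), P.De p.1 * P.De p.2 := by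
  rw [Adj_eq_sum_adjacentEdgePairs, ← sum_adjacentEdgePairs_smul, algAct_eq_mapDomainRingHom,
    map_sum]
  refine sum_congr rfl fun p _ => ?_
  rw [map_mul, ← algAct_eq_mapDomainRingHom, algAct_De, algAct_De]
  rfl

theorem card_filter_subset_smul_lowVertices {n : ℕ} (hn : 3 ≤ n) (hnm : n ≤ m)
    {T : Finset (Fin m)} (hT : #T = 3) :
    (#{σ : alternatingGroup (Fin m) | T ⊆ σ • lowVertices m n} : ℝ) =
      ((n * (n - 1) * (n - 2) : ℕ) : ℝ) * ((m - 3)! / 2 : ℝ) := by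
  have h := Perm.two_mul_card_filter_alternatingGroup_subset_smul
    (by rw [card_lowVertices hnm]; omega) T
  rw [card_lowVertices hnm, hT, Fintype.card_fin] at h
  have hdesc : n.descFactorial 3 = n * (n - 1) * (n - 2) := by
    simp [Nat.descFactorial_succ]
    ring
  rw [hdesc] at h
  have h' := congrArg (Nat.cast : ℕ → ℝ) h
  push_cast at h' ⊢
  linarith

end SimplexSetting

theorem sum_algAct_Adj_general {m : ℕ} {G : Type*} [Group G]
    (P : SimplexSetting m G) :
    ∀ n : ℕ, 3 ≤ n → n ≤ m →
      ∑ σ : alternatingGroup (Fin m), P.algAct σ (P.Adj n) =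
        (((n * (n - 1) * (n - 2) : ℕ) : ℝ) * ((Nat.factorial (m - 3) : ℝ) / 2)) •
          P.Adj m := by
  intro n hn hnm
  set c : ℝ := ((n * (n - 1) * (n - 2) : ℕ) : ℝ) * ((Nat.factorial (m - 3) : ℝ) / 2)
  calc ∑ σ : alternatingGroup (Fin m), P.algAct σ (P.Adj n)
      = ∑ σ : alternatingGroup (Fin m), ∑ p ∈ adjacentEdgePairs univ,
          if p.1 ∪ p.2 ⊆ σ • lowVertices m n then P.De p.1 * P.De p.2 else 0 := by
        refine sum_congr rfl fun σ _ => ?_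
        rw [algAct_Adj, adjacentEdgePairs_eq_filter (subset_univ _), sum_filter]
    _ = ∑ p ∈ adjacentEdgePairs univ,
          (#{σ : alternatingGroup (Fin m) | p.1 ∪ p.2 ⊆ σ • lowVertices m n} : ℝ) •
            (P.De p.1 * P.De p.2) := by
        rw [sum_comm]
        refine sum_congr rfl fun p _ => ?_
        rw [← sum_filter, sum_const, Nat.cast_smul_eq_nsmul]
    _ = c • P.Adj m := by
        rw [Adj_eq_sum_adjacentEdgePairs, lowVertices_self, smul_sum]
        refine sum_congr rfl fun p hp => ?_
        rw [card_filter_subset_smul_lowVertices hn hnm (card_union_of_mem_adjacentEdgePairs hp)]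

/-- `Σ_{σ ∈ A_m} σ(Adj_n) = n(n-1)(n-2)·((m-3)!/2)·Adj_m` for `3 ≤ n ≤ m`. -/
theorem sum_algAct_Adj {m : ℕ} {G : Type*} [Group G]
    (P : SimplexSetting m G) (hm : 3 ≤ m) :
    ∀ n : ℕ, 3 ≤ n → n ≤ m →
      ∑ σ : alternatingGroup (Fin m), P.algAct σ (P.Adj n) =
        (((n * (n - 1) * (n - 2) : ℕ) : ℝ) * ((Nat.factorial (m - 3) : ℝ) / 2)) •
          P.Adj m :=
  sum_algAct_Adj_general P
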